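/- arXiv:1506.07565 — 2 statements merged into one kernel-verified Lean document; each statement's English description precedes it below -/
import Mathlib

section
/- Let \(n > 2k+1\) and let \(H\) be a subgroup of the symmetric group \(S_n\) containing the subgroup \(S_{n-k}\) of all permutations fixing \(\{1, \ldots, k\}\) pointwise. Then \(H\) is conjugate in \(S_n\) to a subgroup of the form \(H' \times S_{n-k'}\) for some \(k' \leq k\) and some subgroup \(H' \leq S_{k'}\). -/
open Equiv Finset

private lemma card_filter_val_lt (n m : ℕ) (hm : m ≤ n) :
    (Finset.univ.filter fun i : Fin n => (i : ℕ) < m).card = m := by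
  have : (Finset.univ.filter fun i : Fin n => (i : ℕ) < m)
      = (Finset.univ : Finset (Fin m)).map ⟨Fin.castLE hm, Fin.castLE_injective hm⟩ := by
    ext i
    simp only [mem_filter, mem_univ, true_and, mem_map, Function.Embedding.coeFn_mk]
    constructor
    · intro hi
      exact ⟨⟨(i : ℕ), hi⟩, by ext; simp [Fin.castLE]⟩
    · rintro ⟨j, rfl⟩
      simp
  rw [this, card_map, card_univ, Fintype.card_fin]

/-- If `n > 2k+1` and `H ≤ Sₙ` contains the pointwise stabilizer of `{0,…,k-1}`
(the copy of `S_{n-k}` on the last `n-k` points), then `H` is conjugate to a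
subgroup of the form `H' × S_{n-k'}` for some `k' ≤ k`: i.e. after conjugation,
every element preserves the first `k'` points setwise, and the full pointwise
stabilizer of the first `k'` points is contained. -/
theorem subgroup_containing_large_symmetric_is_conjugate_to_product
    (n k : ℕ) (hn : n > 2 * k + 1) (H : Subgroup (Equiv.Perm (Fin n)))
    (hH : ∀ σ : Equiv.Perm (Fin n), (∀ i : Fin n, (i : ℕ) < k → σ i = i) → σ ∈ H) :
    ∃ k' ≤ k, ∃ g : Equiv.Perm (Fin n),
      (∀ τ ∈ Subgroup.map (MulAut.conj g).toMonoidHom H,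
        ∀ i : Fin n, (i : ℕ) < k' → ((τ i : Fin n) : ℕ) < k') ∧
      (∀ τ : Equiv.Perm (Fin n), (∀ i : Fin n, (i : ℕ) < k' → τ i = i) →
        τ ∈ Subgroup.map (MulAut.conj g).toMonoidHom H) := by
  classical
  -- the "big orbit": points reachable from some point ≥ k by an element of H
  set O : Set (Fin n) := {a | ∃ σ ∈ H, ∃ m : Fin n, k ≤ (m : ℕ) ∧ σ m = a} with hO
  have hMO : ∀ m : Fin n, k ≤ (m : ℕ) → m ∈ O := fun m hm => ⟨1, H.one_mem, m, hm, rfl⟩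
  have hinv : ∀ σ ∈ H, ∀ a ∈ O, σ a ∈ O := by
    rintro σ hσ a ⟨h, hh, m, hm, rfl⟩
    exact ⟨σ * h, H.mul_mem hσ hh, m, hm, rfl⟩
  have hinv' : ∀ σ ∈ H, ∀ a : Fin n, a ∉ O → σ a ∉ O := by
    intro σ hσ a ha hmem
    exact ha (by simpa using hinv σ⁻¹ (H.inv_mem hσ) _ hmem)
  -- swaps of two high points are in H
  have hswapM : ∀ x y : Fin n, k ≤ (x : ℕ) → k ≤ (y : ℕ) → Equiv.swap x y ∈ H := by
    intro x y hx hy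
    refine hH _ fun i hi => Equiv.swap_apply_of_ne_of_ne ?_ ?_
    · rintro rfl; omega
    · rintro rfl; omega
  -- "connectedness" relation
  have Ptrans : ∀ a b c : Fin n, (a = b ∨ Equiv.swap a b ∈ H) →
      (b = c ∨ Equiv.swap b c ∈ H) → (a = c ∨ Equiv.swap a c ∈ H) := by
    intro a b c hab hbc
    rcases hab with rfl | hab
    · exact hbc
    rcases hbc with rfl | hbc
    · exact Or.inr hab
    by_cases hac : a = c
    · exact Or.inl hac
    by_cases hcb : c = b
    · subst hcb; exact Or.inr hab
    right
    have key : Equiv.swap (Equiv.swap a b b) (Equiv.swap a b c) ∈ H := by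
      rw [Equiv.swap_apply_apply]
      exact H.mul_mem (H.mul_mem hab hbc) (H.inv_mem hab)
    rwa [Equiv.swap_apply_right,
      Equiv.swap_apply_of_ne_of_ne (Ne.symm hac) hcb] at key
  -- every point of O is connected to a high point
  have hconn : ∀ a ∈ O, ∃ x : Fin n, k ≤ (x : ℕ) ∧ (a = x ∨ Equiv.swap a x ∈ H) := by
    rintro a ⟨h, hh, m, hm, rfl⟩
    -- find m' ≠ m with k ≤ m' and k ≤ h m'
    have : ∃ m' : Fin n, k ≤ (m' : ℕ) ∧ m' ≠ m ∧ k ≤ ((h m' : Fin n) : ℕ) := by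
      by_contra hcon
      push_neg at hcon
      set A : Finset (Fin n) := Finset.univ.filter fun m' => k ≤ (m' : ℕ) ∧ m' ≠ m with hA
      have himg : A.image (fun x => h x) ⊆ Finset.univ.filter fun i : Fin n => (i : ℕ) < k := by
        intro x hx
        simp only [mem_image, hA, mem_filter, mem_univ, true_and] at hx ⊢
        obtain ⟨m', ⟨h1, h2⟩, rfl⟩ := hx
        exact hcon m' h1 h2
      have hcardA : A.card ≤ k := by
        calc A.card = (A.image (fun x => h x)).card :=
              (Finset.card_image_of_injective _ h.injective).symm
          _ ≤ k := by
              have := Finset.card_le_card himg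
              rwa [card_filter_val_lt n k (by omega)] at this
      have hAc : Aᶜ ⊆ (Finset.univ.filter fun i : Fin n => (i : ℕ) < k) ∪ {m} := by
        intro x hx
        simp only [hA, Finset.mem_compl, mem_filter, mem_univ, true_and, not_and, not_ne_iff,
          Finset.mem_union, Finset.mem_singleton] at hx ⊢
        by_cases hxk : k ≤ (x : ℕ)
        · exact Or.inr (hx hxk)
        · exact Or.inl (by omega)
      have hAcc : Aᶜ.card ≤ k + 1 := by
        calc Aᶜ.card ≤ _ := Finset.card_le_card hAc
          _ ≤ (Finset.univ.filter fun i : Fin n => (i : ℕ) < k).card + 1 := by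
              simpa using Finset.card_union_le (Finset.univ.filter fun i : Fin n => (i : ℕ) < k) {m}
          _ = k + 1 := by rw [card_filter_val_lt n k (by omega)]
      have := Finset.card_add_card_compl A
      rw [Fintype.card_fin] at this
      omega
    obtain ⟨m', hm'1, hm'2, hm'3⟩ := this
    refine ⟨h m', hm'3, ?_⟩
    by_cases he : h m = h m'
    · exact Or.inl he
    right
    have : Equiv.swap (h m) (h m') = h * Equiv.swap m m' * h⁻¹ := Equiv.swap_apply_apply h m m'
    rw [this]
    exact H.mul_mem (H.mul_mem hh (hswapM m m' hm hm'1)) (H.inv_mem hh)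
  -- any two distinct points of O can be swapped within H
  have hswapO : ∀ a ∈ O, ∀ b ∈ O, a ≠ b → Equiv.swap a b ∈ H := by
    intro a ha b hb hab
    obtain ⟨x, hx, hax⟩ := hconn a ha
    obtain ⟨y, hy, hby⟩ := hconn b hb
    have hxy : x = y ∨ Equiv.swap x y ∈ H := by
      by_cases h : x = y
      · exact Or.inl h
      · exact Or.inr (hswapM x y hx hy)
    have hyb : y = b ∨ Equiv.swap y b ∈ H := by
      rcases hby with rfl | h
      · exact Or.inl rfl
      · exact Or.inr (by rwa [Equiv.swap_comm])
    have := Ptrans a x b hax (Ptrans x y b hxy hyb)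
    rcases this with rfl | h
    · exact absurd rfl hab
    · exact h
  -- any permutation supported on O is in H
  have hsupp : ∀ N : ℕ, ∀ σ : Equiv.Perm (Fin n), σ.support.card ≤ N →
      (∀ a : Fin n, σ a ≠ a → a ∈ O) → σ ∈ H := by
    intro N
    induction N with
    | zero =>
      intro σ hσ _
      have : σ.support = ∅ := Finset.card_eq_zero.mp (Nat.le_zero.mp hσ)
      have : σ = 1 := by rwa [Equiv.Perm.support_eq_empty_iff] at this
      rw [this]; exact H.one_mem
    | succ N ih =>
      intro σ hσ hsub
      by_cases h1 : σ = 1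
      · rw [h1]; exact H.one_mem
      obtain ⟨a, ha⟩ : ∃ a, σ a ≠ a := by
        by_contra hc; push_neg at hc
        exact h1 (Equiv.ext hc)
      have haO : a ∈ O := hsub a ha
      have hbO : σ a ∈ O := by
        refine hsub (σ a) fun hc => ha (σ.injective hc)
      have hswap : Equiv.swap a (σ a) ∈ H := hswapO a haO (σ a) hbO (Ne.symm ha)
      set σ' := Equiv.swap a (σ a) * σ with hσ'
      have hcard : σ'.support.card < σ.support.card :=
        Equiv.Perm.card_support_swap_mul ha
      have hσ'H : σ' ∈ H := by
        refine ih σ' (by omega) ?_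
        intro c hc
        by_cases hcσ : σ c = c
        · have : σ' c = Equiv.swap a (σ a) c := by simp [hσ', hcσ]
          rw [this] at hc
          rcases Equiv.swap_apply_ne_self_iff.mp hc with ⟨-, hc2 | hc2⟩
          · exact hc2 ▸ haO
          · exact hc2 ▸ hbO
        · exact hsub c hcσ
      have : σ = Equiv.swap a (σ a) * σ' := by
        rw [hσ', ← mul_assoc, Equiv.swap_mul_self, one_mul]
      rw [this]
      exact H.mul_mem hswap hσ'H
  -- the fixed complement F
  set F : Finset (Fin n) := Finset.univ.filter fun a => a ∉ O with hF
  set k' := F.card with hk'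
  have hFk : F ⊆ Finset.univ.filter fun i : Fin n => (i : ℕ) < k := by
    intro a ha
    simp only [hF, mem_filter, mem_univ, true_and] at ha ⊢
    by_contra hc
    exact ha (hMO a (by omega))
  have hk'k : k' ≤ k := by
    have := Finset.card_le_card hFk
    rwa [card_filter_val_lt n k (by omega)] at this
  -- build the conjugating permutation
  have hc1 : Fintype.card {a : Fin n // a ∈ F} = Fintype.card {a : Fin n // (a : ℕ) < k'} := by
    rw [Fintype.card_coe, Fintype.card_subtype, card_filter_val_lt n k' (by omega)]
  have hc2 : Fintype.card {a : Fin n // a ∉ F} = Fintype.card {a : Fin n // ¬ (a : ℕ) < k'} := by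
    rw [Fintype.card_subtype_compl, Fintype.card_subtype_compl, hc1]
  set g : Equiv.Perm (Fin n) :=
    Equiv.subtypeCongr (Fintype.equivOfCardEq hc1) (Fintype.equivOfCardEq hc2) with hg
  have hgkey : ∀ a : Fin n, a ∈ F ↔ ((g a : Fin n) : ℕ) < k' := by
    intro a
    by_cases ha : a ∈ F
    · simp only [hg, Equiv.subtypeCongr, Equiv.trans_apply,
        Equiv.sumCompl_symm_apply_of_pos ha, Equiv.sumCongr_apply, Sum.map_inl,
        Equiv.sumCompl_apply_inl]
      exact iff_of_true ha (Fintype.equivOfCardEq hc1 ⟨a, ha⟩).2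
    · simp only [hg, Equiv.subtypeCongr, Equiv.trans_apply,
        Equiv.sumCompl_symm_apply_of_neg ha, Equiv.sumCongr_apply, Sum.map_inr,
        Equiv.sumCompl_apply_inr]
      exact iff_of_false ha (Fintype.equivOfCardEq hc2 ⟨a, ha⟩).2
  refine ⟨k', hk'k, g, ?_, ?_⟩
  · rintro τ hτ i hi
    obtain ⟨σ, hσ, rfl⟩ := hτ
    have h1 : g⁻¹ i ∈ F := by
      rw [hgkey]
      simpa using hi
    have h2 : σ (g⁻¹ i) ∈ F := by
      simp only [hF, mem_filter, mem_univ, true_and] at h1 ⊢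
      exact hinv' σ hσ _ h1
    rw [hgkey] at h2
    simpa [Equiv.Perm.mul_apply] using h2
  · intro τ hτ
    have hσ : g⁻¹ * τ * g ∈ H := by
      refine hsupp n _ (le_trans (Finset.card_le_univ _) (by simp)) ?_
      intro a ha
      by_contra haO
      have haF : a ∈ F := by simp [hF, haO]
      have : ((g a : Fin n) : ℕ) < k' := (hgkey a).mp haF
      have : τ (g a) = g a := hτ _ this
      apply ha
      simp [Equiv.Perm.mul_apply, this]
    refine ⟨g⁻¹ * τ * g, hσ, ?_⟩
    simp only [MulEquiv.coe_toMonoidHom, MulAut.conj_apply]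
    group
end

section
/- Let \(n > 2k+1\), let \(H \leq S_n\) contain the pointwise stabilizer \(S_{n-k}\) of \(\{1, \ldots, k\}\), and suppose the orbit of the point \(n\) under \(H\) has size \(n - k + j\) with \(j > 0\). Then, after conjugating so that this orbit is the last \(n - (k - j)\) points, \(H\) contains the full pointwise stabilizer \(S_{n-(k-j)}\) of \(\{1, \ldots, k-j\}\). -/
/-- If `n > 2k+1`, `H ≤ Sₙ` contains the pointwise stabilizer of the first `k`
points, and the `H`-orbit of the last point has size `n - k + j` with `j > 0`,
then after conjugation `H` contains the full pointwise stabilizer of the first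
`k - j` points. -/
theorem contains_larger_symmetric_of_orbit
    (n k j : ℕ) (hn : n > 2 * k + 1) (hj : 0 < j)
    (H : Subgroup (Equiv.Perm (Fin n)))
    (hH : ∀ σ : Equiv.Perm (Fin n), (∀ i : Fin n, (i : ℕ) < k → σ i = i) → σ ∈ H)
    (horbit : Set.ncard {x : Fin n | ∃ σ ∈ H, σ (⟨n - 1, by omega⟩ : Fin n) = x}
      = n - k + j) :
    ∃ g : Equiv.Perm (Fin n),
      ∀ σ : Equiv.Perm (Fin n), (∀ i : Fin n, (i : ℕ) < k - j → σ i = i) →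
        σ ∈ Subgroup.map (MulAut.conj g).toMonoidHom H := by
  classical
  set last : Fin n := ⟨n - 1, by omega⟩ with hlast
  set S : Set (Fin n) := {x : Fin n | ∃ σ ∈ H, σ last = x} with hSdef
  -- j ≤ k
  have hcardS : S.ncard = n - k + j := horbit
  have hSle : S.ncard ≤ n := by
    calc S.ncard ≤ (Set.univ : Set (Fin n)).ncard :=
          Set.ncard_le_ncard (Set.subset_univ S) Set.finite_univ
      _ = n := by rw [Set.ncard_univ, Nat.card_eq_fintype_card, Fintype.card_fin]
  have hjk : j ≤ k := by omega
  -- swaps of two points ≥ k lie in H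
  have hswapH : ∀ c d : Fin n, k ≤ (c : ℕ) → k ≤ (d : ℕ) → Equiv.swap c d ∈ H := by
    intro c d hc hd
    apply hH
    intro i hi
    apply Equiv.swap_apply_of_ne_of_ne
    · intro h; subst h; omega
    · intro h; subst h; omega
  -- any point of the orbit can be swapped with any point ≥ k
  have hA : ∀ a ∈ S, ∀ c : Fin n, k ≤ (c : ℕ) → c ≠ a → Equiv.swap a c ∈ H := by
    rintro a ⟨σ, hσH, hσa⟩ c hc hca
    -- pigeonhole : some x with k ≤ x < n-1 has σ x ≥ k
    have hx : ∃ x : Fin n, k ≤ (x : ℕ) ∧ (x : ℕ) < n - 1 ∧ k ≤ ((σ x : Fin n) : ℕ) := by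
      by_contra hcon
      push_neg at hcon
      have hmem : ∀ i : Fin (k + 1), ((σ ⟨k + (i : ℕ), by omega⟩ : Fin n) : ℕ) < k := by
        intro i
        exact hcon ⟨k + (i : ℕ), by omega⟩ (by simp) (by have := i.2; simp; omega)
      obtain ⟨i, i', hne, heq⟩ := Fintype.exists_ne_map_eq_of_card_lt
        (fun i : Fin (k + 1) => (⟨((σ ⟨k + (i : ℕ), by omega⟩ : Fin n) : ℕ), hmem i⟩ : Fin k))
        (by simp)
      apply hne
      have h1 : (σ ⟨k + (i : ℕ), by omega⟩ : Fin n) = σ ⟨k + (i' : ℕ), by omega⟩ := by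
        have := congrArg Fin.val heq
        simp only at this
        exact Fin.ext this
      have h2 := σ.injective h1
      have := congrArg Fin.val h2
      simp only at this
      exact Fin.ext (by omega)
    obtain ⟨x, hxk, hxlt, hb⟩ := hx
    set b : Fin n := σ x with hbdef
    have hxne : x ≠ last := by
      intro h; subst h; simp [hlast] at hxlt
    have hba : b ≠ a := by
      intro h
      exact hxne (σ.injective (h.trans hσa.symm))
    have hswab : Equiv.swap a b ∈ H := by
      have hmem : σ * Equiv.swap last x * σ⁻¹ ∈ H :=
        mul_mem (mul_mem hσH (hswapH last x (by simp [hlast]; omega) hxk)) (inv_mem hσH)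
      have : Equiv.swap a b = σ * Equiv.swap last x * σ⁻¹ := by
        rw [← Equiv.swap_apply_apply, hσa]
      rwa [this]
    rcases eq_or_ne c b with rfl | hcb
    · exact hswab
    · have h1 : Equiv.swap b c ∈ H := hswapH b c hb hc
      have hmem : Equiv.swap b c * Equiv.swap a b * (Equiv.swap b c)⁻¹ ∈ H :=
        mul_mem (mul_mem h1 hswab) (inv_mem h1)
      have heq : Equiv.swap b c * Equiv.swap a b * (Equiv.swap b c)⁻¹
          = Equiv.swap a c := by
        rw [← Equiv.swap_apply_apply, Equiv.swap_apply_of_ne_of_ne hba.symm hca.symm,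
          Equiv.swap_apply_left]
      rwa [heq] at hmem
  -- any two distinct points of the orbit can be swapped within H
  have hA2 : ∀ a ∈ S, ∀ a' ∈ S, a ≠ a' → Equiv.swap a a' ∈ H := by
    intro a ha a' ha' hne
    have h3 : ∃ m : ℕ, k ≤ m ∧ m < n ∧ m ≠ (a : ℕ) ∧ m ≠ (a' : ℕ) := by
      by_cases h1 : (a : ℕ) = k ∨ (a' : ℕ) = k
      · by_cases h2 : (a : ℕ) = k + 1 ∨ (a' : ℕ) = k + 1
        · exact ⟨k + 2, by omega⟩
        · exact ⟨k + 1, by omega⟩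
      · exact ⟨k, by omega⟩
    obtain ⟨m, hm1, hm2, hm3, hm4⟩ := h3
    set c : Fin n := ⟨m, hm2⟩ with hcdef
    have hca : c ≠ a := by intro h; apply hm3; rw [← h]
    have hca' : c ≠ a' := by intro h; apply hm4; rw [← h]
    have h1 : Equiv.swap a c ∈ H := hA a ha c hm1 hca
    have h2 : Equiv.swap a' c ∈ H := hA a' ha' c hm1 hca'
    have hmem : Equiv.swap a' c * Equiv.swap a c * (Equiv.swap a' c)⁻¹ ∈ H :=
      mul_mem (mul_mem h2 h1) (inv_mem h2)
    have heq : Equiv.swap a' c * Equiv.swap a c * (Equiv.swap a' c)⁻¹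
        = Equiv.swap a a' := by
      rw [← Equiv.swap_apply_apply, Equiv.swap_apply_of_ne_of_ne hne hca.symm,
        Equiv.swap_apply_right]
    rwa [heq] at hmem
  -- any permutation fixing the complement of S pointwise lies in H
  have hB : ∀ σ : Equiv.Perm (Fin n), (∀ x : Fin n, x ∉ S → σ x = x) → σ ∈ H := by
    intro σ hσ
    have hmaps : ∀ x : Fin n, σ x ∈ S ↔ x ∈ S := by
      intro x
      rw [Iff.comm]
      constructor
      · intro hx
        by_contra hnx
        have h1 : σ (σ x) = σ x := hσ _ hnx
        have h2 : σ x = x := σ.injective h1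
        rw [h2] at hnx
        exact hnx hx
      · intro hx
        by_contra hnx
        rw [hσ x hnx] at hx
        exact hnx hx
    have hofs : Equiv.Perm.ofSubtype (σ.subtypePerm hmaps) = σ :=
      Equiv.Perm.ofSubtype_subtypePerm hmaps
        (fun x hx => by by_contra h; exact hx (hσ x h))
    rw [← hofs]
    have htop : σ.subtypePerm hmaps ∈
        Subgroup.closure {τ : Equiv.Perm {x : Fin n // x ∈ S} | τ.IsSwap} := by
      rw [Equiv.Perm.closure_isSwap]; trivial
    refine Subgroup.closure_induction ?_ ?_ ?_ ?_ htop
    · rintro τ ⟨a, b, hab, rfl⟩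
      rw [Equiv.Perm.ofSubtype_swap_eq]
      exact hA2 a.1 a.2 b.1 b.2 (fun h => hab (Subtype.ext h))
    · rw [map_one]; exact one_mem H
    · intro x y _ _ hx hy
      rw [map_mul]; exact mul_mem hx hy
    · intro x _ hx
      rw [map_inv]; exact inv_mem hx
  -- cardinalities
  have cardlt : ∀ m : ℕ, m ≤ n → Fintype.card {x : Fin n // (x : ℕ) < m} = m := by
    intro m hm
    have e : {x : Fin n // (x : ℕ) < m} ≃ Fin m :=
      { toFun := fun x => ⟨x.1, x.2⟩
        invFun := fun y => ⟨⟨y.1, lt_of_lt_of_le y.2 hm⟩, y.2⟩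
        left_inv := fun x => rfl
        right_inv := fun y => rfl }
    rw [Fintype.card_congr e, Fintype.card_fin]
  have cardS : Fintype.card {x : Fin n // x ∈ S} = n - k + j := by
    rw [← Nat.card_eq_fintype_card, Nat.card_coe_set_eq, hcardS]
  have cardT : Fintype.card {x : Fin n // k - j ≤ (x : ℕ)} = n - k + j := by
    have e : {x : Fin n // k - j ≤ (x : ℕ)} ≃ {x : Fin n // ¬ ((x : ℕ) < k - j)} :=
      Equiv.subtypeEquivRight (by intro x; omega)
    rw [Fintype.card_congr e, Fintype.card_subtype_compl,
      cardlt (k - j) (by omega), Fintype.card_fin]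
    omega
  have e : {x : Fin n // x ∈ S} ≃ {x : Fin n // k - j ≤ (x : ℕ)} :=
    Fintype.equivOfCardEq (cardS.trans cardT.symm)
  refine ⟨e.extendSubtype, fun σ hσ => ?_⟩
  rw [Subgroup.mem_map]
  refine ⟨e.extendSubtype⁻¹ * σ * e.extendSubtype, hB _ ?_, ?_⟩
  · intro x hx
    have h1 : ¬ (k - j ≤ ((e.extendSubtype x : Fin n) : ℕ)) :=
      e.extendSubtype_not_mem x hx
    have h2 : σ (e.extendSubtype x) = e.extendSubtype x := hσ _ (by omega)
    simp [Equiv.Perm.mul_apply, h2]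
  · simp only [MulEquiv.coe_toMonoidHom, MulAut.conj_apply]
    group
end
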